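/- For any languages L over Σ and nonempty languages K₁,…,Kₙ, the downward closure commutes with substitution: ↓(ρ(L)) = ρ'(↓(L)), where ρ substitutes each letter a_i by K_i and ρ' substitutes each a_i by ↓(K_i). -/

import Mathlib

/-!
A subword of a word in `K i₁ ⋯ K iₘ` splits into subwords of the factors, which gives `⊆`.
Conversely, a word of `↓K j₁ ⋯ ↓K jₖ` with `j₁ ⋯ jₖ` a subword of `w ∈ L` is a subword of a word
of `subst K w`: pad it with an arbitrary element of `K i` (nonempty) for each letter `i` of `w`
that was deleted.
-/

def dcl {β : Type*} (L : Set (List β)) : Set (List β) :=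
  {x | ∃ y ∈ L, x.Sublist y}

def subst {A β : Type*} (K : A → Set (List β)) : List A → Set (List β)
  | [] => {[]}
  | i :: w => Set.image2 (· ++ ·) (K i) (subst K w)

section

variable {A β : Type*}

theorem subset_dcl {L : Set (List β)} : L ⊆ dcl L :=
  fun x hx => ⟨x, hx, List.Sublist.refl x⟩

theorem dcl_mono {L M : Set (List β)} (h : L ⊆ M) : dcl L ⊆ dcl M :=
  fun _ ⟨y, hy, hxy⟩ => ⟨y, h hy, hxy⟩

theorem dcl_subst_subset_subst_dcl (K : A → Set (List β)) :
    ∀ w : List A, dcl (subst K w) ⊆ subst (fun i => dcl (K i)) w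
  | [], x, ⟨y, hy, hxy⟩ => by
      rw [subst, Set.mem_singleton_iff] at hy
      subst hy
      simp [subst, List.sublist_nil.mp hxy]
  | i :: w, x, ⟨_, ⟨a, ha, b, hb, hab⟩, hxy⟩ => by
      subst hab
      obtain ⟨x₁, x₂, rfl, h₁, h₂⟩ := List.sublist_append_iff.mp hxy
      exact ⟨x₁, ⟨a, ha, h₁⟩, x₂, dcl_subst_subset_subst_dcl K w ⟨b, hb, h₂⟩, rfl⟩

theorem subst_dcl_subset_dcl_subst {K : A → Set (List β)} (hK : ∀ i, (K i).Nonempty)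
    {w' w : List A} (hw : w'.Sublist w) :
    subst (fun i => dcl (K i)) w' ⊆ dcl (subst K w) := by
  induction hw with
  | slnil =>
      intro x hx
      rw [subst, Set.mem_singleton_iff] at hx
      exact ⟨[], rfl, hx ▸ List.Sublist.refl []⟩
  | cons i _ ih =>
      intro x hx
      obtain ⟨y, hy, hxy⟩ := ih hx
      obtain ⟨z, hz⟩ := hK i
      exact ⟨z ++ y, ⟨z, hz, y, hy, rfl⟩, hxy.trans (List.sublist_append_right z y)⟩
  | cons_cons i _ ih =>
      rintro _ ⟨a, ⟨a', ha', haa'⟩, b, hb, rfl⟩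
      obtain ⟨y, hy, hby⟩ := ih hb
      exact ⟨a' ++ y, ⟨a', ha', y, hy, rfl⟩, haa'.append hby⟩

end

/-- Downward closure commutes with substitution (for nonempty `K i`). -/
theorem dcl_subst_comm {A β : Type*} (K : A → Set (List β))
    (hK : ∀ i, (K i).Nonempty) (L : Set (List A)) :
    dcl (⋃ w ∈ L, subst K w) = ⋃ w ∈ dcl L, subst (fun i => dcl (K i)) w := by
  apply Set.Subset.antisymm
  · rintro x ⟨y, hy, hxy⟩
    obtain ⟨w, hw, hyw⟩ := Set.mem_iUnion₂.mp hy
    exact Set.mem_iUnion₂.mpr ⟨w, subset_dcl hw, dcl_subst_subset_subst_dcl K w ⟨y, hyw, hxy⟩⟩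
  · refine Set.iUnion₂_subset fun w' ⟨w, hw, hw'w⟩ => ?_
    exact (subst_dcl_subset_dcl_subst hK hw'w).trans
      (dcl_mono (Set.subset_biUnion_of_mem (u := fun w => subst K w) hw))
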